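/- arXiv:1411.7636 — 2 statements merged into one kernel-verified Lean document; each statement's English description precedes it below -/
import Mathlib

section
/- For every modal algebra (A, ◇), the relation R_A on the set of ultrafilters of A defined by x R_A y iff (for all a ∈ A, a ∈ y implies ◇a ∈ x) makes the map a ↦ {x : a ∈ x} a Boolean algebra embedding of A into the powerset algebra of ultrafilters that moreover commutes with the diamond operation, i.e., the image of ◇a equals ◇_{R_A} of the image of a. -/
/-!
Stone representation, extended to the modal operator. Every ultrafilter is the complement of a
prime ideal, so by the prime ideal theorem any filter disjoint from an ideal extends to an
ultrafilter still disjoint from it; separating `a` from `b` this way gives injectivity. For the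
diamond, if `◇a ∈ x` then `{b | ◇b ∉ x}` is an ideal (as `◇` preserves `⊥` and `⊔`) disjoint from
the principal filter of `a`, and the ultrafilter `y` it produces satisfies `a ∈ y` and `x R y`.
-/

/-- An ultrafilter of a Boolean algebra. -/
structure BAUltrafilter (A : Type*) [BooleanAlgebra A] where
  carrier : Set A
  top_mem : ⊤ ∈ carrier
  bot_not_mem : ⊥ ∉ carrier
  mem_of_le : ∀ a b : A, a ∈ carrier → a ≤ b → b ∈ carrier
  inf_mem : ∀ a b : A, a ∈ carrier → b ∈ carrier → a ⊓ b ∈ carrier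
  ultra : ∀ a : A, a ∈ carrier ∨ aᶜ ∈ carrier

namespace BAUltrafilter

variable {A B : Type*} [BooleanAlgebra A] [BooleanAlgebra B]

section Membership

variable (u : BAUltrafilter A) {a b : A}

lemma inf_mem_iff : a ⊓ b ∈ u.carrier ↔ a ∈ u.carrier ∧ b ∈ u.carrier :=
  ⟨fun h => ⟨u.mem_of_le _ _ h inf_le_left, u.mem_of_le _ _ h inf_le_right⟩,
    fun h => u.inf_mem _ _ h.1 h.2⟩

lemma compl_mem_iff : aᶜ ∈ u.carrier ↔ a ∉ u.carrier := by
  refine ⟨fun hc ha => u.bot_not_mem ?_, (u.ultra a).resolve_left⟩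
  simpa using u.inf_mem _ _ ha hc

lemma sup_mem_iff : a ⊔ b ∈ u.carrier ↔ a ∈ u.carrier ∨ b ∈ u.carrier := by
  refine ⟨fun h => ?_, ?_⟩
  · by_contra! hab
    have : (a ⊔ b)ᶜ ∈ u.carrier := by
      rw [compl_sup, inf_mem_iff, compl_mem_iff, compl_mem_iff]
      exact hab
    exact (u.compl_mem_iff.1 this) h
  · rintro (h | h)
    exacts [u.mem_of_le _ _ h le_sup_left, u.mem_of_le _ _ h le_sup_right]

end Membership

def ofPrimeIdeal (J : Order.Ideal A) (hJ : J.IsPrime) : BAUltrafilter A where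
  carrier := (J : Set A)ᶜ
  top_mem := Order.Ideal.isProper_iff_top_notMem.1 hJ.toIsProper
  bot_not_mem := not_not.2 J.bot_mem
  mem_of_le _ _ ha hab := Order.Ideal.mem_compl_of_ge hab ha
  inf_mem _ _ ha hb hab := (hJ.mem_or_mem hab).elim ha hb
  ultra _ := hJ.toIsProper.notMem_or_compl_notMem

lemma exists_superset_disjoint {F : Order.PFilter A} {I : Order.Ideal A}
    (hFI : Disjoint (F : Set A) I) :
    ∃ u : BAUltrafilter A, (F : Set A) ⊆ u.carrier ∧ Disjoint u.carrier I := by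
  obtain ⟨J, hJ, hIJ, hFJ⟩ := DistribLattice.prime_ideal_of_disjoint_filter_ideal hFI
  exact ⟨ofPrimeIdeal J hJ, hFJ.subset_compl_right, disjoint_compl_left.mono_right hIJ⟩

lemma le_of_forall_mem_imp {a b : A} (h : ∀ u : BAUltrafilter A, a ∈ u.carrier → b ∈ u.carrier) :
    a ≤ b := by
  by_contra hab
  have hFI : Disjoint (Order.PFilter.principal a : Set A) (Order.Ideal.principal b) :=
    Set.disjoint_left.2 fun c hac hcb => hab (le_trans hac hcb)
  obtain ⟨u, hFu, hIu⟩ := exists_superset_disjoint hFI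
  exact Set.disjoint_left.1 hIu (h u (hFu le_rfl)) (Order.Ideal.mem_principal.2 le_rfl)

def comapComplIdeal (D : SupBotHom A B) (x : BAUltrafilter B) : Order.Ideal A where
  carrier := {a | D a ∉ x.carrier}
  lower' _ _ hba ha hb := ha (x.mem_of_le _ _ hb (OrderHomClass.mono D hba))
  nonempty' := ⟨⊥, by simpa using x.bot_not_mem⟩
  directed' a ha b hb :=
    ⟨a ⊔ b, by simpa [map_sup, sup_mem_iff] using And.intro ha hb, le_sup_left, le_sup_right⟩

lemma exists_forall_map_mem_of_map_mem (D : SupBotHom A B) {x : BAUltrafilter B} {a : A}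
    (ha : D a ∈ x.carrier) :
    ∃ y : BAUltrafilter A, a ∈ y.carrier ∧ ∀ b ∈ y.carrier, D b ∈ x.carrier := by
  have hFI : Disjoint (Order.PFilter.principal a : Set A) (comapComplIdeal D x) :=
    Set.disjoint_left.2 fun c hac hc => hc (x.mem_of_le _ _ ha (OrderHomClass.mono D hac))
  obtain ⟨y, hFy, hIy⟩ := exists_superset_disjoint hFI
  exact ⟨y, hFy le_rfl, fun b hb => not_not.1 (Set.disjoint_left.1 hIy hb)⟩

end BAUltrafilter

open BAUltrafilter in
theorem stmt_0 {A : Type*} [BooleanAlgebra A] (d : A → A)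
    (hd0 : d ⊥ = ⊥) (hdsup : ∀ a b : A, d (a ⊔ b) = d a ⊔ d b)
    (R : BAUltrafilter A → BAUltrafilter A → Prop)
    (hR : ∀ x y, R x y ↔ ∀ a : A, a ∈ y.carrier → d a ∈ x.carrier)
    (φ : A → Set (BAUltrafilter A))
    (hφ : ∀ a, φ a = {x | a ∈ x.carrier}) :
    Function.Injective φ ∧
    (∀ a b : A, φ (a ⊓ b) = φ a ∩ φ b) ∧
    (∀ a b : A, φ (a ⊔ b) = φ a ∪ φ b) ∧
    (∀ a : A, φ aᶜ = (φ a)ᶜ) ∧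
    φ ⊤ = Set.univ ∧ φ ⊥ = ∅ ∧
    (∀ a : A, φ (d a) = {x | ∃ y ∈ φ a, R x y}) := by
  obtain rfl : φ = fun a => {x | a ∈ x.carrier} := funext hφ
  let D : SupBotHom A A := ⟨⟨d, hdsup⟩, hd0⟩
  refine ⟨fun a b hab => ?_, fun a b => Set.ext fun u => u.inf_mem_iff,
    fun a b => Set.ext fun u => u.sup_mem_iff, fun a => Set.ext fun u => u.compl_mem_iff,
    Set.eq_univ_of_forall fun u => u.top_mem, Set.eq_empty_of_forall_notMem fun u => u.bot_not_mem,
    fun a => Set.ext fun x => ⟨fun ha => ?_, fun ⟨y, hy, hxy⟩ => (hR x y).1 hxy a hy⟩⟩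
  · exact le_antisymm (le_of_forall_mem_imp fun u => (Set.ext_iff.1 hab u).1)
      (le_of_forall_mem_imp fun u => (Set.ext_iff.1 hab u).2)
  · obtain ⟨y, hay, hxy⟩ := exists_forall_map_mem_of_map_mem D ha
    exact ⟨y, hay, (hR x y).2 hxy⟩
end

section
/- On the frame with domain ℕ ∪ {∞}, relation R given by (n+1) R n for all n ∈ ℕ and ∞ R ∞, with admissible sets ℱ consisting of all finite subsets of ℕ together with all cofinite subsets of ℕ ∪ {∞} containing ∞: the least pre-fixed point of the map S ↦ {0} ∪ ◇_R(S) over all subsets of the domain is ℕ, whereas the intersection of all pre-fixed points of this map lying in ℱ is ℕ ∪ {∞}. -/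
/-!
Every pre-fixed point of `S ↦ {0} ∪ ◇S` contains `0` and is closed under `n ↦ n + 1`, hence contains
all of `ℕ`; and `ℕ` itself is a pre-fixed point, since `∞` is `R`-related only to itself.
Among the admissible sets, a pre-fixed point is infinite, so it is cofinite and contains `∞`:
the only admissible pre-fixed point is the whole frame.
-/

open Set

section Diamond

variable {α : Type*} (R : α → α → Prop)

def diamond (S : Set α) : Set α := {x | ∃ y ∈ S, R x y}

theorem range_subset_of_union_diamond_subset {f : ℕ → α} (hf : ∀ n, R (f (n + 1)) (f n))
    {S : Set α} (hS : {f 0} ∪ diamond R S ⊆ S) : range f ⊆ S := by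
  rintro _ ⟨n, rfl⟩
  induction n with
  | zero => exact hS (Or.inl rfl)
  | succ n ih => exact hS (Or.inr ⟨f n, ih, hf n⟩)

end Diamond

/-- The frame ℕ ∪ {∞}, with `none` playing the role of ∞. -/
theorem stmt_4
    (R : Option ℕ → Option ℕ → Prop)
    (hR : ∀ a b, R a b ↔ ((∃ n : ℕ, a = some (n + 1) ∧ b = some n) ∨ (a = none ∧ b = none)))
    (dia : Set (Option ℕ) → Set (Option ℕ))
    (hdia : ∀ S, dia S = {x | ∃ y ∈ S, R x y})
    (F : Set (Option ℕ) → Set (Option ℕ))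
    (hF : ∀ S, F S = {some 0} ∪ dia S)
    (ℱ : Set (Set (Option ℕ)))
    (hℱ : ℱ = {S | (S.Finite ∧ none ∉ S) ∨ (Sᶜ.Finite ∧ none ∈ S)}) :
    ⋂₀ {S | F S ⊆ S} = {x | ∃ n : ℕ, x = some n} ∧
    ⋂₀ {S | S ∈ ℱ ∧ F S ⊆ S} = Set.univ := by
  have hF' : ∀ S, F S = {some 0} ∪ diamond R S := fun S => by rw [hF, hdia]; rfl
  have range_some_subset : ∀ S, F S ⊆ S → range some ⊆ S := fun S hS =>
    range_subset_of_union_diamond_subset R (fun n => (hR _ _).2 (Or.inl ⟨n, rfl, rfl⟩))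
      (hF' S ▸ hS)
  have range_some_prefixed : F (range some) ⊆ range some := by
    rw [hF']
    rintro x (rfl | ⟨_, ⟨n, rfl⟩, hx⟩)
    · exact mem_range_self 0
    · obtain ⟨m, rfl, -⟩ | ⟨-, ⟨⟩⟩ := (hR _ _).1 hx
      exact mem_range_self (m + 1)
  constructor
  · have hleast : IsLeast {S | F S ⊆ S} (range some) := ⟨range_some_prefixed, range_some_subset⟩
    refine hleast.isGLB.sInf_eq.trans ?_
    ext x
    simp only [mem_range, mem_ofPred_eq, eq_comm]
  · refine sInter_eq_univ.2 fun S ⟨hSℱ, hS⟩ => ?_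
    rw [hℱ] at hSℱ
    rcases hSℱ with ⟨hfin, -⟩ | ⟨-, hnone⟩
    · exact absurd (hfin.subset (range_some_subset S hS))
        (infinite_range_of_injective (Option.some_injective ℕ))
    · exact eq_univ_of_univ_subset
        (insert_none_range_some ℕ ▸ insert_subset hnone (range_some_subset S hS))
end
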